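/- arXiv:1810.00794 — 7 statements merged into one kernel-verified Lean document; each statement's English description precedes it below -/
import Mathlib

section
/- Let E = EuclideanSpace ℝ (Fin 2), let C ⊆ E be a convex set, let P ⊆ E be a finite point set, and let a, b : Fin k → E be centers such that P ⊆ ⋃ i, (a i +ᵥ C) and P ⊆ ⋃ j, (b j +ᵥ C). Suppose the 2-colored intersection graph of the two families of translates — the simple graph on Fin k ⊕ Fin k in which Sum.inl i is adjacent to Sum.inr j exactly when (a i +ᵥ C) ∩ (b j +ᵥ C) is nonempty, and there are no other edges — is acyclic. Then there exist maps γ : Fin k → ℝ → E, continuous in the time variable on [0,1], with γ i 0 = a i for all i, and a permutation σ of Fin k with γ i 1 = b (σ i) for all i, such that for every t ∈ [0,1], P ⊆ ⋃ i, (γ i t +ᵥ C). (That is, the red translates can be continuously morphed onto the blue translates, without changing their shape or size, while covering P at all times.) -/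
/-
Move the red translates one at a time, in a fixed order, each along the segment from its centre to
the centre of its blue partner. A point `p` is then covered at every moment as long as, whenever a
red translate containing `p` moves, either it ends at a blue translate containing `p` (convexity
keeps `p` covered during the slide), or an earlier red translate already ended at a blue
translate containing `p`. Such an order and matching are built greedily: among `n` remaining reds
and blues, the forest of their intersections has fewer than `2n` edges, so some remaining red
meets at most one remaining blue; matching it with that blue (or any blue) keeps the invariant.
-/

open Metric Set Real Pointwise

noncomputable section

abbrev E : Type := EuclideanSpace ℝ (Fin 2)

noncomputable def pt (x y : ℝ) : E := WithLp.toLp 2 ![x, y]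

/-- A continuous morph on `[0,1]` from configuration `(c0, r0)` to configuration `(c1, r1)`
of `k` balls, covering the point set `P` at all times. -/
def IsMorph {X : Type*} [PseudoMetricSpace X] (k : ℕ) (P : Set X)
    (c0 c1 : Fin k → X) (r0 r1 : Fin k → ℝ)
    (γ : Fin k → ℝ → X) (ρ : Fin k → ℝ → ℝ) : Prop :=
  (∀ i, ContinuousOn (γ i) (Set.Icc 0 1)) ∧
  (∀ i, ContinuousOn (ρ i) (Set.Icc 0 1)) ∧
  (∀ i, ∀ t ∈ Set.Icc (0:ℝ) 1, 0 ≤ ρ i t) ∧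
  (∀ i, γ i 0 = c0 i) ∧
  (∀ i, ρ i 0 = r0 i) ∧
  (∃ σ : Equiv.Perm (Fin k), (∀ i, γ i 1 = c1 (σ i)) ∧ (∀ i, ρ i 1 = r1 (σ i))) ∧
  (∀ t ∈ Set.Icc (0:ℝ) 1, P ⊆ ⋃ i, Metric.closedBall (γ i t) (ρ i t))

namespace SimpleGraph

open Finset

variable {V ι κ : Type*}

theorem IsAcyclic.card_edgeFinset_lt [Fintype V] [Nonempty V] {G : SimpleGraph V}
    [Fintype G.edgeSet] (hG : G.IsAcyclic) : #G.edgeFinset < Fintype.card V := by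
  obtain ⟨T, hGT, -, hT⟩ := connected_top.exists_isTree_le_of_le_of_isAcyclic le_top hG
  classical
  have := Finset.card_le_card (edgeFinset_mono hGT)
  have := hT.card_edgeFinset
  omega

theorem IsAcyclic.exists_inl_subsingleton_inr_adj [Fintype ι] [Fintype κ] [Nonempty ι]
    {G : SimpleGraph (ι ⊕ κ)} (hG : G.IsAcyclic) (hcard : Fintype.card κ ≤ Fintype.card ι) :
    ∃ i, {j | G.Adj (.inl i) (.inr j)}.Subsingleton := by
  classical
  by_contra! h
  have htwo : ∀ i, 2 ≤ #{j | G.Adj (.inl i) (.inr j)} := fun i => by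
    obtain ⟨j, hj, j', hj', hne⟩ := h i
    exact one_lt_card.mpr ⟨j, by simpa using hj, j', by simpa using hj', hne⟩
  have hpairs : #{q : ι × κ | G.Adj (.inl q.1) (.inr q.2)} ≤ #G.edgeFinset :=
    card_le_card_of_injOn (fun q => s(.inl q.1, .inr q.2))
      (fun q hq => by simpa [mem_edgeFinset] using hq) (by simp +contextual [Set.InjOn])
  have : 2 * Fintype.card ι < 2 * Fintype.card ι := calc
    2 * Fintype.card ι = ∑ _i : ι, 2 := by simp [mul_comm]
    _ ≤ ∑ i, #{j | G.Adj (.inl i) (.inr j)} := Finset.sum_le_sum fun i _ => htwo i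
    _ = #{q : ι × κ | G.Adj (.inl q.1) (.inr q.2)} := by
      simp only [card_filter, Fintype.sum_prod_type]
    _ ≤ #G.edgeFinset := hpairs
    _ < Fintype.card (ι ⊕ κ) := hG.card_edgeFinset_lt
    _ ≤ 2 * Fintype.card ι := by rw [Fintype.card_sum]; omega
  exact lt_irrefl _ this

theorem IsAcyclic.exists_mem_subsingleton_adj {G : SimpleGraph (ι ⊕ κ)} (hG : G.IsAcyclic)
    {s : Finset ι} {t : Finset κ} (hs : s.Nonempty) (hst : #t ≤ #s) :
    ∃ i ∈ s, {j | j ∈ t ∧ G.Adj (.inl i) (.inr j)}.Subsingleton := by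
  let f : s ⊕ t ↪ ι ⊕ κ := (Function.Embedding.subtype _).sumMap (Function.Embedding.subtype _)
  have : Nonempty s := hs.to_subtype
  obtain ⟨⟨i, hi⟩, hsub⟩ := (hG.of_comap f).exists_inl_subsingleton_inr_adj (by simpa using hst)
  refine ⟨i, hi, fun j hj j' hj' => ?_⟩
  simpa using @hsub ⟨j, hj.1⟩ hj.2 ⟨j', hj'.1⟩ hj'.2

end SimpleGraph

section Schedule

open Finset

variable {ι α : Type*}

/-- With `R p` / `B p` the reds / blues covering `p` and `t` the blues not matched yet, matching
red `i` with blue `j` is safe if `j` covers every point that `i` covers and no matched blue does. -/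
def IsSafeMatch (R B : α → Set ι) (t : Finset ι) (i j : ι) : Prop :=
  ∀ p, B p ⊆ t → i ∈ R p → j ∈ B p

theorem exists_schedule [DecidableEq ι] (R B : α → Set ι)
    (hstep : ∀ s t : Finset ι, s.Nonempty → #s = #t → ∃ i ∈ s, ∃ j ∈ t, IsSafeMatch R B t i j)
    (s t : Finset ι) (hst : #s = #t) :
    ∃ (σ : Equiv.Perm ι) (rank : ι → ℕ), (∀ i ∈ s, σ i ∈ t ∧ rank i < #s) ∧
      ∀ p, B p ⊆ t → ∀ i ∈ s, i ∈ R p → ∃ i' ∈ s, σ i' ∈ B p ∧ (i' = i ∨ rank i' < rank i) := by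
  induction s using Finset.strongInduction generalizing t with
  | H s ih =>
    rcases s.eq_empty_or_nonempty with rfl | hs
    · exact ⟨1, fun _ => 0, by simp, by simp⟩
    obtain ⟨i₀, hi₀, j₀, hj₀, hsafe⟩ := hstep s t hs hst
    obtain ⟨σ', rank', hσ', hsched'⟩ := ih (s.erase i₀) (erase_ssubset hi₀) (t.erase j₀)
      (by rw [card_erase_of_mem hi₀, card_erase_of_mem hj₀, hst])
    let σ := Equiv.swap j₀ (σ' i₀) * σ'
    let rank := Function.update (fun i => rank' i + 1) i₀ 0
    have hσ₀ : σ i₀ = j₀ := by simp [σ]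
    have hσ : ∀ i ∈ s.erase i₀, σ i = σ' i := fun i hi => by
      obtain ⟨hne, -⟩ := mem_erase.mp hi
      exact Equiv.swap_apply_of_ne_of_ne (mem_erase.mp (hσ' i hi).1).1 (σ'.injective.ne hne)
    have hrank : ∀ i ∈ s.erase i₀, rank i = rank' i + 1 := fun i hi =>
      Function.update_of_ne (mem_erase.mp hi).1 _ _
    refine ⟨σ, rank, fun i hi => ?_, fun p hBt i hi hiR => ?_⟩
    · rcases eq_or_ne i i₀ with rfl | hne
      · simpa [hσ₀, rank] using ⟨hj₀, hs⟩
      · have hi' := mem_erase.mpr ⟨hne, hi⟩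
        have := card_erase_add_one hi₀
        exact ⟨hσ i hi' ▸ mem_of_mem_erase (hσ' i hi').1, hrank i hi' ▸ by
          have := (hσ' i hi').2; omega⟩
    by_cases hj₀B : j₀ ∈ B p
    · refine ⟨i₀, hi₀, hσ₀ ▸ hj₀B, ?_⟩
      rcases eq_or_ne i i₀ with rfl | hne
      · exact .inl rfl
      · exact .inr (by simp [rank, hne])
    have hne : i ≠ i₀ := fun h => hj₀B (hsafe p hBt (h ▸ hiR))
    have hBt' : B p ⊆ t.erase j₀ := fun j hj =>
      mem_erase.mpr ⟨ne_of_mem_of_not_mem hj hj₀B, hBt hj⟩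
    have hi' := mem_erase.mpr ⟨hne, hi⟩
    obtain ⟨i', hi'', hB', hlt⟩ := hsched' p hBt' i hi' hiR
    refine ⟨i', mem_of_mem_erase hi'', hσ i' hi'' ▸ hB', ?_⟩
    rw [hrank i' hi'', hrank i hi']
    exact hlt.imp_right Nat.succ_lt_succ

theorem SimpleGraph.IsAcyclic.exists_isSafeMatch {G : SimpleGraph (ι ⊕ ι)} (hG : G.IsAcyclic)
    (R B : α → Set ι)
    (hRB : ∀ p, ∀ i ∈ R p, ∀ j ∈ B p, G.Adj (.inl i) (.inr j)) (hB : ∀ p, (B p).Nonempty)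
    {s t : Finset ι} (hs : s.Nonempty) (hst : #s = #t) :
    ∃ i ∈ s, ∃ j ∈ t, IsSafeMatch R B t i j := by
  obtain ⟨i, hi, hsub⟩ := hG.exists_mem_subsingleton_adj hs hst.ge
  refine ⟨i, hi, ?_⟩
  by_cases hadj : ∃ j ∈ t, G.Adj (.inl i) (.inr j)
  · obtain ⟨j, hj, hij⟩ := hadj
    refine ⟨j, hj, fun p hBt hiR => ?_⟩
    obtain ⟨j', hj'⟩ := hB p
    rwa [hsub ⟨hBt hj', hRB p i hiR j' hj'⟩ ⟨hj, hij⟩] at hj'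
  · obtain ⟨j, hj⟩ := (card_pos.mp (hst ▸ hs.card_pos) : t.Nonempty)
    refine ⟨j, hj, fun p hBt hiR => ?_⟩
    obtain ⟨j', hj'⟩ := hB p
    exact absurd ⟨j', hBt hj', hRB p i hiR j' hj'⟩ hadj

end Schedule

section StagedMotion

variable {V : Type*} [AddCommGroup V] [Module ℝ V]

theorem Convex.setOf_mem_vadd {C : Set V} (hC : Convex ℝ C) (p : V) :
    Convex ℝ {x : V | p ∈ x +ᵥ C} := by
  have : {x : V | p ∈ x +ᵥ C} = p +ᵥ -C := by
    ext x
    simp [mem_vadd_set_iff_neg_vadd_mem, neg_add_eq_sub]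
  exact this ▸ hC.neg.vadd p

/-- Moves from `x` to `y` at constant speed during the time window `[m / n, (m + 1) / n]`. -/
noncomputable def stagedLineMap (n m : ℕ) (x y : V) (t : ℝ) : V :=
  AffineMap.lineMap x y (projIcc 0 1 zero_le_one (n * t - m) : ℝ)

variable {n m : ℕ} {x y : V} {t : ℝ}

theorem continuous_stagedLineMap [TopologicalSpace V] [IsTopologicalAddGroup V]
    [ContinuousSMul ℝ V] : Continuous (stagedLineMap n m x y) :=
  AffineMap.lineMap_continuous.comp <| continuous_subtype_val.comp <|
    continuous_projIcc.comp <| by fun_prop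

theorem stagedLineMap_of_le (h : n * t ≤ m) : stagedLineMap n m x y t = x := by
  simp [stagedLineMap, projIcc_of_le_left _ (sub_nonpos.mpr h)]

theorem stagedLineMap_of_ge (h : m + 1 ≤ n * t) : stagedLineMap n m x y t = y := by
  simp [stagedLineMap, projIcc_of_right_le _ (le_sub_iff_add_le'.mpr h)]

theorem stagedLineMap_mem_segment : stagedLineMap n m x y t ∈ segment ℝ x y :=
  lineMap_mem_segment ℝ x y (projIcc 0 1 zero_le_one _).2

theorem mem_iUnion_vadd_stagedLineMap {ι : Type*} {C : Set V} (hC : Convex ℝ C) (n : ℕ)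
    (rank : ι → ℕ) (a b : ι → V) {p : V} {i i' : ι} (hi : p ∈ a i +ᵥ C) (hi' : p ∈ b i' +ᵥ C)
    (hii' : i' = i ∨ rank i' < rank i) (t : ℝ) :
    p ∈ ⋃ l, stagedLineMap n (rank l) (a l) (b l) t +ᵥ C := by
  rcases hii' with rfl | hlt
  · exact mem_iUnion.mpr
      ⟨i', (hC.setOf_mem_vadd p).segment_subset hi hi' stagedLineMap_mem_segment⟩
  by_cases hdone : (rank i' + 1 : ℝ) ≤ n * t
  · exact mem_iUnion.mpr ⟨i', by rwa [stagedLineMap_of_ge hdone]⟩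
  · have : (rank i' + 1 : ℝ) ≤ rank i := by exact_mod_cast hlt
    exact mem_iUnion.mpr ⟨i, by rwa [stagedLineMap_of_le (by linarith)]⟩

end StagedMotion

theorem morph_translates_of_acyclic_intersection_graph_general
    (k : ℕ) (C : Set E) (hC : Convex ℝ C) (P : Set E)
    (a b : Fin k → E)
    (ha : P ⊆ ⋃ i, a i +ᵥ C) (hb : P ⊆ ⋃ j, b j +ᵥ C)
    (G : SimpleGraph (Fin k ⊕ Fin k))
    (hG : ∀ u v, G.Adj u v ↔ ∃ i j,
        ((u = Sum.inl i ∧ v = Sum.inr j) ∨ (u = Sum.inr j ∧ v = Sum.inl i)) ∧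
        ((a i +ᵥ C) ∩ (b j +ᵥ C)).Nonempty)
    (hacyc : G.IsAcyclic) :
    ∃ (γ : Fin k → ℝ → E) (σ : Equiv.Perm (Fin k)),
      (∀ i, ContinuousOn (γ i) (Set.Icc 0 1)) ∧
      (∀ i, γ i 0 = a i) ∧
      (∀ i, γ i 1 = b (σ i)) ∧
      (∀ t ∈ Set.Icc (0:ℝ) 1, P ⊆ ⋃ i, γ i t +ᵥ C) := by
  let R : P → Set (Fin k) := fun p => {i | ↑p ∈ a i +ᵥ C}
  let B : P → Set (Fin k) := fun p => {j | ↑p ∈ b j +ᵥ C}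
  have hRB : ∀ p, ∀ i ∈ R p, ∀ j ∈ B p, G.Adj (.inl i) (.inr j) := fun p i hi j hj =>
    (hG _ _).mpr ⟨i, j, .inl ⟨rfl, rfl⟩, p, hi, hj⟩
  have hB : ∀ p, (B p).Nonempty := fun p => mem_iUnion.mp (hb p.2)
  obtain ⟨σ, rank, hrank, hsched⟩ := exists_schedule R B
    (fun _ _ => hacyc.exists_isSafeMatch R B hRB hB) Finset.univ Finset.univ rfl
  refine ⟨fun i => stagedLineMap k (rank i) (a i) (b (σ i)), σ,
    fun i => continuous_stagedLineMap.continuousOn,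
    fun i => stagedLineMap_of_le (by simp),
    fun i => stagedLineMap_of_ge <| by
      have : rank i + 1 ≤ k := by simpa using (hrank i (Finset.mem_univ i)).2
      rw [mul_one]
      exact_mod_cast this,
    fun t _ p hp => ?_⟩
  obtain ⟨i, hi⟩ := mem_iUnion.mp (ha hp)
  obtain ⟨i', -, hi', hii'⟩ := hsched ⟨p, hp⟩ (by simp) i (Finset.mem_univ i) hi
  exact mem_iUnion_vadd_stagedLineMap hC k rank a (b ∘ σ) hi hi' hii' t

theorem morph_translates_of_acyclic_intersection_graph
    (k : ℕ) (C : Set E) (hC : Convex ℝ C) (P : Set E) (hP : P.Finite)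
    (a b : Fin k → E)
    (ha : P ⊆ ⋃ i, a i +ᵥ C) (hb : P ⊆ ⋃ j, b j +ᵥ C)
    (G : SimpleGraph (Fin k ⊕ Fin k))
    (hG : ∀ u v, G.Adj u v ↔ ∃ i j,
        ((u = Sum.inl i ∧ v = Sum.inr j) ∨ (u = Sum.inr j ∧ v = Sum.inl i)) ∧
        ((a i +ᵥ C) ∩ (b j +ᵥ C)).Nonempty)
    (hacyc : G.IsAcyclic) :
    ∃ (γ : Fin k → ℝ → E) (σ : Equiv.Perm (Fin k)),
      (∀ i, ContinuousOn (γ i) (Set.Icc 0 1)) ∧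
      (∀ i, γ i 0 = a i) ∧
      (∀ i, γ i 1 = b (σ i)) ∧
      (∀ t ∈ Set.Icc (0:ℝ) 1, P ⊆ ⋃ i, γ i t +ᵥ C) :=
  morph_translates_of_acyclic_intersection_graph_general k C hC P a b ha hb G hG hacyc
end
end

section
/- Let p_a, p_b, p_c, p_d be four points in the Euclidean plane such that the four cyclically consecutive distances satisfy dist(p_a, p_b) ≤ 2, dist(p_b, p_c) ≤ 2, dist(p_c, p_d) ≤ 2, and dist(p_d, p_a) ≤ 2. Then min(dist(p_a, p_c), dist(p_b, p_d)) ≤ 2√2. -/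
/-! By Euler's quadrilateral inequality the squared diagonals of any quadrilateral sum to at most
the sum of its squared sides, here at most `16`; so the two diagonals cannot both exceed
`√8 = 2√2`. -/

open Metric

section Quadrilateral

variable {V : Type*} [NormedAddCommGroup V] [InnerProductSpace ℝ V]

/-- Euler's quadrilateral identity: the defect `a - b + c - d` is twice the vector joining the
midpoints of the two diagonals. -/
theorem sum_sq_sides_eq_sum_sq_diagonals_add (a b c d : V) :
    ‖a - b‖ ^ 2 + ‖b - c‖ ^ 2 + ‖c - d‖ ^ 2 + ‖d - a‖ ^ 2 =
      ‖a - c‖ ^ 2 + ‖b - d‖ ^ 2 + ‖a - b + c - d‖ ^ 2 := by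
  simp only [← real_inner_self_eq_norm_sq, inner_sub_left, inner_sub_right, inner_add_left,
    inner_add_right]
  rw [real_inner_comm a b, real_inner_comm a c, real_inner_comm a d, real_inner_comm b c,
    real_inner_comm b d, real_inner_comm c d]
  ring

theorem dist_sq_add_dist_sq_le_sum_sides (a b c d : V) :
    dist a c ^ 2 + dist b d ^ 2 ≤
      dist a b ^ 2 + dist b c ^ 2 + dist c d ^ 2 + dist d a ^ 2 := by
  simp only [dist_eq_norm, sum_sq_sides_eq_sum_sq_diagonals_add a b c d]
  linarith [sq_nonneg ‖a - b + c - d‖]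

end Quadrilateral

theorem diagonal_of_four_cycle_short
    (pa pb pc pd : E)
    (hab : dist pa pb ≤ 2) (hbc : dist pb pc ≤ 2)
    (hcd : dist pc pd ≤ 2) (hda : dist pd pa ≤ 2) :
    min (dist pa pc) (dist pb pd) ≤ 2 * Real.sqrt 2 := by
  have hquad := dist_sq_add_dist_sq_le_sum_sides pa pb pc pd
  have hsqrt : (2 * Real.sqrt 2) ^ 2 = 8 := by
    rw [mul_pow, Real.sq_sqrt zero_le_two]; norm_num
  by_contra! hlong
  obtain ⟨hac, hbd⟩ := lt_min_iff.mp hlong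
  have hpos : 0 ≤ 2 * Real.sqrt 2 := by positivity
  nlinarith [dist_nonneg (x := pa) (y := pb), dist_nonneg (x := pb) (y := pc),
    dist_nonneg (x := pc) (y := pd), dist_nonneg (x := pd) (y := pa)]
end

section
/- Let x, y, z be three points in the Euclidean plane with dist(x, y) ≤ 2, dist(y, z) ≤ 2, and dist(x, z) ≤ 2√2. Then there exists a point m in the plane such that x, y, z all lie in the closed disk of radius √2 centered at m. -/
open Metric

/-
Center a disk of radius `r` at a point `m` on the segment from `y` to the midpoint `p` of `x z`.
By Apollonius, `dist y p ^ 2 + dist x p ^ 2 ≤ 2 r ^ 2`, hence `dist y p ≤ r + (r - dist x p)`;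
so `m` can be taken within `r` of `y` and within `r - dist x p` of `p`, and then `x` and `z`,
both at distance `dist x p` from `p`, are within `r` of `m`.
-/

section

variable {V P : Type*}

theorem exists_dist_le_dist_le_of_dist_le_add [SeminormedAddCommGroup V] [NormedSpace ℝ V]
    [PseudoMetricSpace P] [NormedAddTorsor V P] {p q : P} {a b : ℝ} (ha : 0 ≤ a) (hb : 0 ≤ b)
    (h : dist p q ≤ a + b) : ∃ m : P, dist p m ≤ a ∧ dist m q ≤ b := by
  by_cases hpq : dist p q ≤ a
  · exact ⟨q, hpq, by simpa using hb⟩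
  have hd : 0 < dist p q := ha.trans_lt (not_le.mp hpq)
  have ht : a / dist p q ≤ 1 := (div_le_one hd).mpr (le_of_not_ge hpq)
  refine ⟨AffineMap.lineMap p q (a / dist p q), ?_, ?_⟩
  · rw [dist_left_lineMap, Real.norm_of_nonneg (div_nonneg ha hd.le), div_mul_cancel₀ _ hd.ne']
  · rw [dist_lineMap_right, Real.norm_of_nonneg (sub_nonneg.mpr ht), sub_mul,
      div_mul_cancel₀ _ hd.ne']
    linarith

theorem exists_mem_closedBall_of_dist_le_of_dist_sq_add_dist_sq_le [NormedAddCommGroup V]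
    [InnerProductSpace ℝ V] [MetricSpace P] [NormedAddTorsor V P] {x y z : P} {r : ℝ}
    (hxz : dist x z ≤ 2 * r) (hy : dist y x ^ 2 + dist y z ^ 2 ≤ 4 * r ^ 2) :
    ∃ m : P, x ∈ closedBall m r ∧ y ∈ closedBall m r ∧ z ∈ closedBall m r := by
  set p := midpoint ℝ x z
  have hxp : dist x p = dist x z / 2 := by
    rw [dist_left_midpoint, Real.norm_two]; ring
  have hzp : dist z p = dist x z / 2 := by
    rw [dist_comm, dist_midpoint_right, Real.norm_two]; ring
  have hr : 0 ≤ r := by linarith [dist_nonneg (x := x) (y := z)]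
  have hyp : dist y p ≤ r + (r - dist x z / 2) := by
    have apollonius := EuclideanGeometry.dist_sq_add_dist_sq_eq_two_mul_dist_midpoint_sq_add_half_dist_sq y x z
    nlinarith [dist_nonneg (x := y) (y := p), sq_nonneg (dist y p - (r - dist x z / 2))]
  obtain ⟨m, hym, hmp⟩ := exists_dist_le_dist_le_of_dist_le_add hr (by linarith) hyp
  refine ⟨m, ?_, hym, ?_⟩ <;> rw [mem_closedBall]
  · linarith [dist_triangle x p m, dist_comm m p]
  · linarith [dist_triangle z p m, dist_comm m p]

end

theorem triple_covered_by_sqrt_two_disk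
    (x y z : E) (hxy : dist x y ≤ 2) (hyz : dist y z ≤ 2)
    (hxz : dist x z ≤ 2 * Real.sqrt 2) :
    ∃ m : E, x ∈ Metric.closedBall m (Real.sqrt 2) ∧
      y ∈ Metric.closedBall m (Real.sqrt 2) ∧
      z ∈ Metric.closedBall m (Real.sqrt 2) := by
  refine exists_mem_closedBall_of_dist_le_of_dist_sq_add_dist_sq_le hxz ?_
  rw [dist_comm y x, Real.sq_sqrt zero_le_two]
  nlinarith [dist_nonneg (x := x) (y := y), dist_nonneg (x := y) (y := z)]
end

section
/- Let E = EuclideanSpace ℝ (Fin 2), let P ⊆ E be a finite point set, and let ρ* ≥ 0 be the optimal 2-center radius of P, i.e., every configuration of 2 disks covering P has maximum radius at least ρ*. Let R = (c⁰, r⁰) and B = (c¹, r¹) be two optimal solutions: configurations of 2 disks covering P with r⁰ i ≤ ρ* and r¹ i ≤ ρ* for all i. Then there exists a continuous morph (γ, ρ) on [0,1] from R to B covering P such that ρ i t ≤ √2 · ρ* for all i ∈ Fin 2 and all t ∈ [0,1]. (This is the upper-bound half of the theorem that the topological stability ratio of the minmax Euclidean 2-center problem equals √2.) -/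
open Metric Set Real Pointwise

noncomputable section

/-!
Let `A₁, A₂` and `B₁, B₂` be the disks of the two configurations and `S = √2 ρ*`. Suppose a disk
`X` of radius `S` contains every point of `P` outside `A₂ ∩ B₂`. Then slide `A₁` linearly (centre
and radius) onto `X`, slide `A₂` onto `B₂`, and slide `X` onto `B₁`: in each stage every point lies
in one moving disk at both ends of its segment, hence throughout, since `{(c, r) | dist p c ≤ r}` is
convex. Exchanging `B₁` and `B₂` gives the other pairing.

Such an `X` exists for one of the two pairings. If `A₁` or `A₂` is disjoint from some `Bⱼ`, a disk
concentric with `A₁` or with a `Bⱼ` will do. Otherwise all four centre distances are at most `2ρ*`,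
and `P ∩ (A₁ ∪ B₁)` lies in the chain of lenses `B₂ ∩ A₁`, `A₁ ∩ B₁`, `B₁ ∩ A₂` of the concentric
disks of radius `ρ*`. Going through the lens midpoints bounds the distance between the outer lenses
by `w(A₁, B₂) + dist(midpoints) + w(B₁, A₂)`, `w` the half-width of a lens, and for one of the
pairings this is at most `2S`. Then any three points of the chain lie in a disk of radius `S`, and
Helly's theorem in the plane gives `X`.
-/

open AffineMap Module

theorem le_sqrt_two_mul_self {ρ : ℝ} (hρ : 0 ≤ ρ) : ρ ≤ √2 * ρ :=
  le_mul_of_one_le_left hρ (one_le_sqrt.2 one_le_two)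

section Lens

variable {X : Type*} [PseudoMetricSpace X]

def lens (ρ : ℝ) (a b : X) : Set X := closedBall a ρ ∩ closedBall b ρ

-- Half the common chord of the two disks; the junk value `0` when they are disjoint.
def lensHalfWidth (ρ : ℝ) (a b : X) : ℝ := √(ρ ^ 2 - (dist a b / 2) ^ 2)

theorem lens_comm (ρ : ℝ) (a b : X) : lens ρ a b = lens ρ b a := inter_comm _ _

theorem lensHalfWidth_comm (ρ : ℝ) (a b : X) : lensHalfWidth ρ a b = lensHalfWidth ρ b a := by
  rw [lensHalfWidth, lensHalfWidth, dist_comm]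

theorem lensHalfWidth_le {ρ : ℝ} (hρ : 0 ≤ ρ) (a b : X) : lensHalfWidth ρ a b ≤ ρ :=
  (sqrt_le_left hρ).2 (by nlinarith)

theorem half_dist_add_lensHalfWidth_le {ρ : ℝ} {a b : X} (hab : dist a b ≤ 2 * ρ) :
    dist a b / 2 + lensHalfWidth ρ a b ≤ √2 * ρ := by
  have hh : 0 ≤ dist a b / 2 := by positivity
  have hw : lensHalfWidth ρ a b ^ 2 = ρ ^ 2 - (dist a b / 2) ^ 2 :=
    sq_sqrt (by nlinarith)
  have hw0 : 0 ≤ lensHalfWidth ρ a b := sqrt_nonneg _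
  have hρ : 0 ≤ ρ := by linarith
  have hS2 : (√2 * ρ) ^ 2 = 2 * ρ ^ 2 := by rw [mul_pow, sq_sqrt zero_le_two]
  refine (abs_le_of_sq_le_sq' ?_ (by positivity)).2
  nlinarith [sq_nonneg (dist a b / 2 - lensHalfWidth ρ a b)]

end Lens

section NormedSpace

variable {V : Type*} [NormedAddCommGroup V] [NormedSpace ℝ V]

theorem exists_closedBall_subset_of_dist_le {c v : V} {σ S : ℝ} (hσ : 0 ≤ σ) (hσS : σ ≤ S)
    (hcv : dist c v ≤ 2 * S - σ) : ∃ x, closedBall c σ ⊆ closedBall x S ∧ dist v x ≤ S := by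
  obtain ⟨x, hcx, hxv⟩ := exists_dist_le_le (δ := S - σ) (ε := S) (by linarith) (by linarith)
    (by linarith : dist c v ≤ S + (S - σ))
  exact ⟨x, closedBall_subset_closedBall' (by linarith), by rwa [dist_comm]⟩

end NormedSpace

section InnerProductSpace

variable {F : Type*} [NormedAddCommGroup F] [InnerProductSpace ℝ F]

theorem dist_midpoint_le_lensHalfWidth {ρ : ℝ} {a b z : F} (hz : z ∈ lens ρ a b) :
    dist z (midpoint ℝ a b) ≤ lensHalfWidth ρ a b := by
  obtain ⟨ha, hb⟩ : dist z a ≤ ρ ∧ dist z b ≤ ρ := hz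
  have hapoll :=
    EuclideanGeometry.dist_sq_add_dist_sq_eq_two_mul_dist_midpoint_sq_add_half_dist_sq z a b
  exact le_sqrt_of_sq_le
    (by nlinarith [dist_nonneg (x := z) (y := a), dist_nonneg (x := z) (y := b)])

theorem exists_dist_le_sqrt_two_mul_of_dist_le {ρ : ℝ} {z u v : F} (hρ : 0 ≤ ρ)
    (hzu : dist z u ≤ 2 * ρ) (hzv : dist z v ≤ 2 * ρ) (huv : dist u v ≤ 2 * (√2 * ρ)) :
    ∃ x, dist z x ≤ √2 * ρ ∧ dist u x ≤ √2 * ρ ∧ dist v x ≤ √2 * ρ := by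
  set S := √2 * ρ
  set m := midpoint ℝ u v
  have hum : dist u m = dist u v / 2 := by simp [m, dist_left_midpoint, div_eq_inv_mul]
  have hvm : dist v m = dist u v / 2 := by simp [m, dist_right_midpoint, div_eq_inv_mul]
  have hS2 : S ^ 2 = 2 * ρ ^ 2 := by rw [mul_pow, sq_sqrt zero_le_two]
  have hS0 : 0 ≤ S := by positivity
  have hapoll :=
    EuclideanGeometry.dist_sq_add_dist_sq_eq_two_mul_dist_midpoint_sq_add_half_dist_sq z u v
  -- Apollonius: `dist z m ^ 2 ≤ 4ρ² - d²/4 = (2S - d/2)² - (d - 2S)²/2` where `d = dist u v`.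
  have hmz : dist m z ≤ 2 * S - dist u v / 2 := by
    rw [dist_comm]
    refine abs_le_of_sq_le_sq' ?_ (by linarith) |>.2
    nlinarith [dist_nonneg (x := z) (y := u), dist_nonneg (x := z) (y := v),
      sq_nonneg (dist u v - 2 * S)]
  obtain ⟨x, hball, hzx⟩ := exists_closedBall_subset_of_dist_le (by positivity) (by linarith) hmz
  exact ⟨x, hzx, hball hum.le, hball hvm.le⟩

end InnerProductSpace

section LensChain

variable {X : Type*} [PseudoMetricSpace X]

def lensChain (ρ : ℝ) (a b c d : X) : Set X := lens ρ a b ∪ lens ρ b c ∪ lens ρ c d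

variable {V : Type*} [NormedAddCommGroup V] [NormedSpace ℝ V]

def lensChainLength (ρ : ℝ) (a b c d : V) : ℝ :=
  lensHalfWidth ρ a b + dist (midpoint ℝ a b) (midpoint ℝ c d) + lensHalfWidth ρ c d

theorem lensChainLength_reverse (ρ : ℝ) (a b c d : V) :
    lensChainLength ρ d c b a = lensChainLength ρ a b c d := by
  simp only [lensChainLength, lensHalfWidth_comm ρ d c, lensHalfWidth_comm ρ b a,
    midpoint_comm d c, midpoint_comm b a, dist_comm (midpoint ℝ c d)]
  ring

theorem lensChainLength_le_or_le {ρ : ℝ} {a₁ a₂ b₁ b₂ : V} (h₁₁ : dist a₁ b₁ ≤ 2 * ρ)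
    (h₁₂ : dist a₁ b₂ ≤ 2 * ρ) (h₂₁ : dist a₂ b₁ ≤ 2 * ρ) (h₂₂ : dist a₂ b₂ ≤ 2 * ρ) :
    lensChainLength ρ b₂ a₁ b₁ a₂ ≤ 2 * (√2 * ρ) ∨
      lensChainLength ρ b₁ a₁ b₂ a₂ ≤ 2 * (√2 * ρ) := by
  -- The two lengths add up to at most the sum of `dist / 2 + lensHalfWidth` over the four pairs.
  have m₁ := dist_midpoint_midpoint_le a₁ b₂ b₁ a₂
  have m₂ := dist_midpoint_midpoint_le a₁ b₁ b₂ a₂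
  have k₁₁ := half_dist_add_lensHalfWidth_le h₁₁
  have k₁₂ := half_dist_add_lensHalfWidth_le h₁₂
  have k₂₁ := half_dist_add_lensHalfWidth_le h₂₁
  have k₂₂ := half_dist_add_lensHalfWidth_le h₂₂
  simp only [lensChainLength, midpoint_comm _ a₁, lensHalfWidth_comm _ b₁, lensHalfWidth_comm _ b₂,
    dist_comm b₁ a₂, dist_comm b₂ a₂] at *
  by_contra! h
  linarith

end LensChain

section LensChainCover

open Finset Function

variable {F : Type*} [NormedAddCommGroup F] [InnerProductSpace ℝ F] {ρ : ℝ} {a b c d : F}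

theorem dist_le_lensChainLength {u v : F} (hu : u ∈ lens ρ a b) (hv : v ∈ lens ρ c d) :
    dist u v ≤ lensChainLength ρ a b c d :=
  calc dist u v ≤ dist u (midpoint ℝ a b) + dist (midpoint ℝ a b) (midpoint ℝ c d)
        + dist (midpoint ℝ c d) v := dist_triangle4 _ _ _ _
    _ ≤ lensChainLength ρ a b c d := by
      rw [lensChainLength, dist_comm _ v]
      gcongr <;> exact dist_midpoint_le_lensHalfWidth ‹_›

variable (hρ : 0 ≤ ρ) (hchain : lensChainLength ρ a b c d ≤ 2 * (√2 * ρ))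
include hρ hchain

theorem exists_dist_le_of_mem_lens_middle {u v w : F} (hu : u ∈ lens ρ a b) (hv : v ∈ lens ρ c d)
    (hw : w ∈ lens ρ b c) :
    ∃ x, dist u x ≤ √2 * ρ ∧ dist v x ≤ √2 * ρ ∧ dist w x ≤ √2 * ρ := by
  have hwu : dist w u ≤ 2 * ρ := by
    linarith [dist_triangle_right w u b, mem_closedBall.1 hw.1, mem_closedBall.1 hu.2]
  have hwv : dist w v ≤ 2 * ρ := by
    linarith [dist_triangle_right w v c, mem_closedBall.1 hw.2, mem_closedBall.1 hv.1]
  obtain ⟨x, hwx, hux, hvx⟩ := exists_dist_le_sqrt_two_mul_of_dist_le hρ hwu hwv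
    ((dist_le_lensChainLength hu hv).trans hchain)
  exact ⟨x, hux, hvx, hwx⟩

theorem exists_dist_le_of_two_mem_lens {u u' v : F} (hu : u ∈ lens ρ a b) (hu' : u' ∈ lens ρ a b)
    (hv : v ∈ lens ρ c d) :
    ∃ x, dist u x ≤ √2 * ρ ∧ dist u' x ≤ √2 * ρ ∧ dist v x ≤ √2 * ρ := by
  have hmv : dist (midpoint ℝ a b) v ≤ 2 * (√2 * ρ) - lensHalfWidth ρ a b := by
    have hv' := dist_midpoint_le_lensHalfWidth hv
    rw [lensChainLength] at hchain
    linarith [dist_triangle_right (midpoint ℝ a b) v (midpoint ℝ c d)]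
  obtain ⟨x, hball, hvx⟩ := exists_closedBall_subset_of_dist_le (sqrt_nonneg _)
    ((lensHalfWidth_le hρ a b).trans (le_sqrt_two_mul_self hρ)) hmv
  exact ⟨x, hball (dist_midpoint_le_lensHalfWidth hu), hball (dist_midpoint_le_lensHalfWidth hu'),
    hvx⟩

theorem exists_dist_le_of_mem_lensChain {u v w : F} (hu : u ∈ lens ρ a b) (hv : v ∈ lens ρ c d)
    (hw : w ∈ lensChain ρ a b c d) :
    ∃ x, dist u x ≤ √2 * ρ ∧ dist v x ≤ √2 * ρ ∧ dist w x ≤ √2 * ρ := by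
  rcases hw with (hw | hw) | hw
  · obtain ⟨x, hux, hwx, hvx⟩ := exists_dist_le_of_two_mem_lens hρ hchain hu hw hv
    exact ⟨x, hux, hvx, hwx⟩
  · exact exists_dist_le_of_mem_lens_middle hρ hchain hu hv hw
  · obtain ⟨x, hvx, hwx, hux⟩ := exists_dist_le_of_two_mem_lens hρ
      (by rwa [lensChainLength_reverse]) ((lens_comm ρ c d).subset hv)
      ((lens_comm ρ c d).subset hw) ((lens_comm ρ a b).subset hu)
    exact ⟨x, hux, hvx, hwx⟩

theorem exists_forall_dist_le_of_subset_lensChain_of_card_le_three {I : Finset F}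
    (hI : ↑I ⊆ lensChain ρ a b c d)
    (hcard : #I ≤ 3) : ∃ x, ∀ z ∈ I, dist z x ≤ √2 * ρ := by
  classical
  by_cases hb : ∀ z ∈ I, dist z b ≤ ρ
  · exact ⟨b, fun z hz => (hb z hz).trans (le_sqrt_two_mul_self hρ)⟩
  by_cases hc : ∀ z ∈ I, dist z c ≤ ρ
  · exact ⟨c, fun z hz => (hc z hz).trans (le_sqrt_two_mul_self hρ)⟩
  -- Otherwise `I` meets both outer lenses, and has at most one further point.
  push Not at hb hc
  obtain ⟨v, hvI, hvb⟩ := hb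
  obtain ⟨u, huI, huc⟩ := hc
  have hv : v ∈ lens ρ c d := by
    rcases hI hvI with (h | h) | h
    · exact absurd h.2 hvb.not_ge
    · exact absurd h.1 hvb.not_ge
    · exact h
  have hu : u ∈ lens ρ a b := by
    rcases hI huI with (h | h) | h
    · exact h
    · exact absurd h.2 huc.not_ge
    · exact absurd h.1 huc.not_ge
  have hvu : v ≠ u := fun h => huc.not_ge (h ▸ hv.1)
  have hrest : #((I.erase u).erase v) ≤ 1 := by
    rw [card_erase_of_mem (mem_erase.2 ⟨hvu, hvI⟩), card_erase_of_mem huI]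
    omega
  obtain ⟨w, hw, hw_rest⟩ : ∃ w ∈ lensChain ρ a b c d, ∀ z ∈ (I.erase u).erase v, z = w := by
    rcases ((I.erase u).erase v).eq_empty_or_nonempty with h | ⟨w, hw⟩
    · exact ⟨u, hI huI, by simp [h]⟩
    · exact ⟨w, hI (mem_of_mem_erase (mem_of_mem_erase hw)),
        fun z hz => card_le_one.1 hrest z hz w hw⟩
  obtain ⟨x, hux, hvx, hwx⟩ := exists_dist_le_of_mem_lensChain hρ hchain hu hv hw
  refine ⟨x, fun z hz => ?_⟩
  by_cases hzu : z = u
  · exact hzu ▸ hux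
  by_cases hzv : z = v
  · exact hzv ▸ hvx
  exact hw_rest z (mem_erase.2 ⟨hzv, mem_erase.2 ⟨hzu, hz⟩⟩) ▸ hwx

theorem exists_subset_closedBall_of_subset_lensChain [FiniteDimensional ℝ F]
    (hF : finrank ℝ F ≤ 2) {Q : Set F} (hQ : Q ⊆ lensChain ρ a b c d) :
    ∃ x, Q ⊆ closedBall x (√2 * ρ) := by
  obtain ⟨x, hx⟩ := Convex.helly_theorem_compact' (𝕜 := ℝ)
    (F := fun z : Q => closedBall (z : F) (√2 * ρ)) (fun _ => convex_closedBall _ _)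
    (fun _ => isCompact_closedBall _ _) fun I hI => by
      obtain ⟨x, hx⟩ := exists_forall_dist_le_of_subset_lensChain_of_card_le_three
        (I := I.map (Embedding.subtype _)) hρ hchain (fun z hz => by
          obtain ⟨y, -, rfl⟩ := mem_map.1 hz; exact hQ y.2) (by simp only [card_map]; omega)
      exact ⟨x, mem_iInter₂.2 fun z hz => mem_closedBall_comm.1 (hx z (mem_map_of_mem _ hz))⟩
  exact ⟨x, fun z hz => mem_closedBall_comm.1 (mem_iInter.1 hx ⟨z, hz⟩)⟩

end LensChainCover

section TwoCenters

variable {r₁ r₂ s₁ s₂ : ℝ}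

theorem exists_subset_closedBall_union_inter_of_lt_dist {X : Type*} [PseudoMetricSpace X]
    {a₁ a₂ b₁ b₂ : X} {P : Set X} (hA : P ⊆ closedBall a₁ r₁ ∪ closedBall a₂ r₂)
    (hB : P ⊆ closedBall b₁ s₁ ∪ closedBall b₂ s₂)
    {S : ℝ} (hr₁ : r₁ ≤ S) (hs₁ : s₁ ≤ S) (h : r₁ + s₂ < dist a₁ b₂ ∨ r₂ + s₁ < dist a₂ b₁) :
    ∃ x, P ⊆ closedBall x S ∪ (closedBall a₂ r₂ ∩ closedBall b₂ s₂) := by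
  rcases h with h | h
  · refine ⟨b₁, fun p hp => ?_⟩
    rcases hB hp with hb | hb
    · exact Or.inl (closedBall_subset_closedBall hs₁ hb)
    · exact Or.inr ⟨(hA hp).resolve_left fun ha =>
        disjoint_left.1 (closedBall_disjoint_closedBall h) ha hb, hb⟩
  · refine ⟨a₁, fun p hp => ?_⟩
    rcases hA hp with ha | ha
    · exact Or.inl (closedBall_subset_closedBall hr₁ ha)
    · exact Or.inr ⟨ha, (hB hp).resolve_left fun hb =>
        disjoint_left.1 (closedBall_disjoint_closedBall h) ha hb⟩

variable {F : Type*} [NormedAddCommGroup F] [InnerProductSpace ℝ F] [FiniteDimensional ℝ F]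
  {ρ : ℝ} {a₁ a₂ b₁ b₂ : F} {P : Set F} (hF : finrank ℝ F ≤ 2)
  (hA : P ⊆ closedBall a₁ r₁ ∪ closedBall a₂ r₂) (hB : P ⊆ closedBall b₁ s₁ ∪ closedBall b₂ s₂)
  (hρ : 0 ≤ ρ) (hr₁ : r₁ ≤ ρ) (hr₂ : r₂ ≤ ρ) (hs₁ : s₁ ≤ ρ) (hs₂ : s₂ ≤ ρ)
include hF hA hB hρ hr₁ hr₂ hs₁ hs₂

theorem exists_subset_closedBall_union_inter_of_lensChainLength_le
    (hchain : lensChainLength ρ b₂ a₁ b₁ a₂ ≤ 2 * (√2 * ρ)) :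
    ∃ x, P ⊆ closedBall x (√2 * ρ) ∪ (closedBall a₂ r₂ ∩ closedBall b₂ s₂) := by
  have hQ : P ∩ (closedBall a₁ r₁ ∪ closedBall b₁ s₁) ⊆ lensChain ρ b₂ a₁ b₁ a₂ := by
    rintro p ⟨hp, ha₁ | hb₁⟩
    · have ha₁ := closedBall_subset_closedBall hr₁ ha₁
      rcases hB hp with hb₁ | hb₂
      · exact Or.inl (Or.inr ⟨ha₁, closedBall_subset_closedBall hs₁ hb₁⟩)
      · exact Or.inl (Or.inl ⟨closedBall_subset_closedBall hs₂ hb₂, ha₁⟩)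
    · have hb₁ := closedBall_subset_closedBall hs₁ hb₁
      rcases hA hp with ha₁ | ha₂
      · exact Or.inl (Or.inr ⟨closedBall_subset_closedBall hr₁ ha₁, hb₁⟩)
      · exact Or.inr ⟨hb₁, closedBall_subset_closedBall hr₂ ha₂⟩
  obtain ⟨x, hx⟩ := exists_subset_closedBall_of_subset_lensChain hρ hchain hF hQ
  refine ⟨x, fun p hp => ?_⟩
  by_cases hp₁ : p ∈ closedBall a₁ r₁ ∪ closedBall b₁ s₁
  · exact Or.inl (hx ⟨hp, hp₁⟩)
  · rw [mem_union, not_or] at hp₁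
    exact Or.inr ⟨(hA hp).resolve_left hp₁.1, (hB hp).resolve_left hp₁.2⟩

theorem exists_subset_closedBall_union_inter :
    ∃ x, P ⊆ closedBall x (√2 * ρ) ∪ (closedBall a₂ r₂ ∩ closedBall b₂ s₂) ∨
      P ⊆ closedBall x (√2 * ρ) ∪ (closedBall a₂ r₂ ∩ closedBall b₁ s₁) := by
  have hS := le_sqrt_two_mul_self hρ
  have hB' : P ⊆ closedBall b₂ s₂ ∪ closedBall b₁ s₁ := union_comm _ _ ▸ hB
  by_cases hfar : r₁ + s₂ < dist a₁ b₂ ∨ r₂ + s₁ < dist a₂ b₁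
  · obtain ⟨x, hx⟩ :=
      exists_subset_closedBall_union_inter_of_lt_dist hA hB (hr₁.trans hS) (hs₁.trans hS) hfar
    exact ⟨x, Or.inl hx⟩
  by_cases hfar' : r₁ + s₁ < dist a₁ b₁ ∨ r₂ + s₂ < dist a₂ b₂
  · obtain ⟨x, hx⟩ :=
      exists_subset_closedBall_union_inter_of_lt_dist hA hB' (hr₁.trans hS) (hs₂.trans hS) hfar'
    exact ⟨x, Or.inr hx⟩
  push Not at hfar hfar'
  rcases lensChainLength_le_or_le (ρ := ρ) (a₁ := a₁) (a₂ := a₂) (b₁ := b₁) (b₂ := b₂)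
    (by linarith) (by linarith) (by linarith) (by linarith) with hchain | hchain
  · obtain ⟨x, hx⟩ := exists_subset_closedBall_union_inter_of_lensChainLength_le hF hA hB hρ hr₁
      hr₂ hs₁ hs₂ hchain
    exact ⟨x, Or.inl hx⟩
  · obtain ⟨x, hx⟩ := exists_subset_closedBall_union_inter_of_lensChainLength_le hF hA hB' hρ hr₁
      hr₂ hs₂ hs₁ hchain
    exact ⟨x, Or.inr hx⟩

end TwoCenters

section ThreeStagePath

variable {W : Type*} [AddCommGroup W] [Module ℝ W]

def threeStagePath (a b c d : W) (t : ℝ) : W :=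
  if t ≤ 1 / 3 then lineMap a b (3 * t)
  else if t ≤ 2 / 3 then lineMap b c (3 * t - 1)
  else lineMap c d (3 * t - 2)

theorem threeStagePath_zero (a b c d : W) : threeStagePath a b c d 0 = a := by
  simp [threeStagePath]

theorem threeStagePath_one (a b c d : W) : threeStagePath a b c d 1 = d := by
  norm_num [threeStagePath]

theorem continuous_threeStagePath [TopologicalSpace W] [IsTopologicalAddGroup W]
    [ContinuousSMul ℝ W] (a b c d : W) : Continuous (threeStagePath a b c d) := by
  refine Continuous.if_le (by fun_prop) (Continuous.if_le (by fun_prop) (by fun_prop)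
    continuous_id continuous_const ?_) continuous_id continuous_const ?_ <;>
  rintro t rfl <;> norm_num

theorem exists_threeStagePath_eq_lineMap {t : ℝ} (ht : t ∈ Icc 0 1) :
    ∃ s ∈ Icc (0 : ℝ) 1, (∀ a b c d : W, threeStagePath a b c d t = lineMap a b s) ∨
      (∀ a b c d : W, threeStagePath a b c d t = lineMap b c s) ∨
      (∀ a b c d : W, threeStagePath a b c d t = lineMap c d s) := by
  obtain ⟨h₀, h₁⟩ := ht
  by_cases ht₁ : t ≤ 1 / 3
  · exact ⟨3 * t, ⟨by linarith, by linarith⟩, Or.inl fun a b c d => if_pos ht₁⟩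
  by_cases ht₂ : t ≤ 2 / 3
  · refine ⟨3 * t - 1, ⟨by linarith, by linarith⟩, Or.inr (Or.inl fun a b c d => ?_)⟩
    rw [threeStagePath, if_neg ht₁, if_pos ht₂]
  · refine ⟨3 * t - 2, ⟨by linarith, by linarith⟩, Or.inr (Or.inr fun a b c d => ?_)⟩
    rw [threeStagePath, if_neg ht₁, if_neg ht₂]

end ThreeStagePath

section Morph

variable {V : Type*} [NormedAddCommGroup V] [NormedSpace ℝ V] {k : ℕ} {P : Set V}

def JointlyCover (P : Set V) (K L : Fin k → V × ℝ) : Prop :=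
  ∀ p ∈ P, ∃ i, p ∈ closedBall (K i).1 (K i).2 ∧ p ∈ closedBall (L i).1 (L i).2

theorem JointlyCover.subset_iUnion_lineMap {K L : Fin k → V × ℝ} (h : JointlyCover P K L)
    {s : ℝ} (hs : s ∈ Icc 0 1) :
    P ⊆ ⋃ i, closedBall (lineMap (K i) (L i) s).1 (lineMap (K i) (L i) s).2 := by
  intro p hp
  obtain ⟨i, hK, hL⟩ := h p hp
  have hconv : Convex ℝ {q : V × ℝ | dist q.1 p ≤ q.2} := by
    simpa using (convexOn_univ_dist p).convex_epigraph
  exact mem_iUnion.2 ⟨i, mem_closedBall'.2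
    (hconv.lineMap_mem (mem_closedBall'.1 hK) (mem_closedBall'.1 hL) hs)⟩

theorem exists_isMorph_of_jointlyCover {K₀ K₁ K₂ K₃ : Fin k → V × ℝ} {M : ℝ}
    (hM : ∀ i, (K₀ i).2 ∈ Icc 0 M ∧ (K₁ i).2 ∈ Icc 0 M ∧ (K₂ i).2 ∈ Icc 0 M ∧ (K₃ i).2 ∈ Icc 0 M)
    (h₀₁ : JointlyCover P K₀ K₁) (h₁₂ : JointlyCover P K₁ K₂) (h₂₃ : JointlyCover P K₂ K₃) :
    ∃ γ ρ, IsMorph k P (fun i => (K₀ i).1) (fun i => (K₃ i).1) (fun i => (K₀ i).2)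
      (fun i => (K₃ i).2) γ ρ ∧ ∀ i, ∀ t ∈ Icc (0 : ℝ) 1, ρ i t ≤ M := by
  set path := fun i => threeStagePath (K₀ i) (K₁ i) (K₂ i) (K₃ i)
  have hrad : ∀ i, ∀ t ∈ Icc (0 : ℝ) 1, (path i t).2 ∈ Icc 0 M := by
    intro i t ht
    obtain ⟨hM₀, hM₁, hM₂, hM₃⟩ := hM i
    obtain ⟨s, hs, h | h | h⟩ := exists_threeStagePath_eq_lineMap (W := V × ℝ) ht <;>
      simp only [path, h, snd_lineMap]
    exacts [(convex_Icc 0 M).lineMap_mem hM₀ hM₁ hs, (convex_Icc 0 M).lineMap_mem hM₁ hM₂ hs,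
      (convex_Icc 0 M).lineMap_mem hM₂ hM₃ hs]
  refine ⟨fun i t => (path i t).1, fun i t => (path i t).2, ⟨fun i => ?_, fun i => ?_,
    fun i t ht => (hrad i t ht).1, fun i => ?_, fun i => ?_,
    ⟨Equiv.refl _, fun i => ?_, fun i => ?_⟩, fun t ht => ?_⟩, fun i t ht => (hrad i t ht).2⟩
  · exact (continuous_fst.comp (continuous_threeStagePath _ _ _ _)).continuousOn
  · exact (continuous_snd.comp (continuous_threeStagePath _ _ _ _)).continuousOn
  · simp only [path, threeStagePath_zero]
  · simp only [path, threeStagePath_zero]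
  · simp only [path, threeStagePath_one, Equiv.refl_apply]
  · simp only [path, threeStagePath_one, Equiv.refl_apply]
  · obtain ⟨s, hs, h | h | h⟩ := exists_threeStagePath_eq_lineMap (W := V × ℝ) ht <;>
      simp only [path, h]
    exacts [h₀₁.subset_iUnion_lineMap hs, h₁₂.subset_iUnion_lineMap hs,
      h₂₃.subset_iUnion_lineMap hs]

end Morph

theorem IsMorph.of_comp_perm {X : Type*} [PseudoMetricSpace X] {k : ℕ} {P : Set X}
    {c₀ c₁ : Fin k → X} {r₀ r₁ : Fin k → ℝ} {γ : Fin k → ℝ → X} {ρ : Fin k → ℝ → ℝ}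
    (τ : Equiv.Perm (Fin k)) (h : IsMorph k P c₀ (c₁ ∘ τ) r₀ (r₁ ∘ τ) γ ρ) :
    IsMorph k P c₀ c₁ r₀ r₁ γ ρ := by
  obtain ⟨hγ, hρ, hρ₀, hγ₀, hρ₀', ⟨σ, hγ₁, hρ₁⟩, hcov⟩ := h
  exact ⟨hγ, hρ, hρ₀, hγ₀, hρ₀', ⟨σ.trans τ, hγ₁, hρ₁⟩, hcov⟩

theorem iUnion_fin_two {α : Type*} (s : Fin 2 → Set α) : ⋃ i, s i = s 0 ∪ s 1 := by
  ext
  simp [Fin.exists_fin_two]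

section Parking

variable {V : Type*} [NormedAddCommGroup V] [NormedSpace ℝ V] {P : Set V} {c₀ c₁ : Fin 2 → V}
  {r₀ r₁ : Fin 2 → ℝ} {x : V} {S : ℝ}

theorem exists_isMorph_two_of_subset_union_inter_one (hr₀ : ∀ i, r₀ i ∈ Icc 0 S)
    (hr₁ : ∀ i, r₁ i ∈ Icc 0 S) (h₀ : P ⊆ ⋃ i, closedBall (c₀ i) (r₀ i))
    (h₁ : P ⊆ ⋃ i, closedBall (c₁ i) (r₁ i))
    (hx : P ⊆ closedBall x S ∪ (closedBall (c₀ 1) (r₀ 1) ∩ closedBall (c₁ 1) (r₁ 1))) :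
    ∃ γ ρ, IsMorph 2 P c₀ c₁ r₀ r₁ γ ρ ∧ ∀ i, ∀ t ∈ Icc (0 : ℝ) 1, ρ i t ≤ S := by
  have hS : S ∈ Icc 0 S := ⟨(hr₀ 0).1.trans (hr₀ 0).2, le_rfl⟩
  refine exists_isMorph_of_jointlyCover (K₀ := fun i => (c₀ i, r₀ i))
    (K₁ := ![(x, S), (c₀ 1, r₀ 1)]) (K₂ := ![(x, S), (c₁ 1, r₁ 1)]) (K₃ := fun i => (c₁ i, r₁ i))
    (fun i => ?_) (fun p hp => ?_) (fun p hp => ?_) (fun p hp => ?_)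
  · fin_cases i <;> simp [hr₀, hr₁, hS]
  · by_cases hp₁ : p ∈ closedBall (c₀ 1) (r₀ 1)
    · exact ⟨1, hp₁, by simpa using hp₁⟩
    · exact ⟨0, ((h₀.trans (iUnion_fin_two _).le) hp).resolve_right hp₁,
        by simpa using (hx hp).resolve_right fun h => hp₁ h.1⟩
  · rcases hx hp with hpx | hp₁
    · exact ⟨0, by simpa using hpx, by simpa using hpx⟩
    · exact ⟨1, by simpa using hp₁.1, by simpa using hp₁.2⟩
  · by_cases hp₁ : p ∈ closedBall (c₁ 1) (r₁ 1)
    · exact ⟨1, by simpa using hp₁, hp₁⟩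
    · exact ⟨0, by simpa using (hx hp).resolve_right fun h => hp₁ h.2,
        ((h₁.trans (iUnion_fin_two _).le) hp).resolve_right hp₁⟩

theorem exists_isMorph_two_of_subset_union_inter {j : Fin 2} (hr₀ : ∀ i, r₀ i ∈ Icc 0 S)
    (hr₁ : ∀ i, r₁ i ∈ Icc 0 S) (h₀ : P ⊆ ⋃ i, closedBall (c₀ i) (r₀ i))
    (h₁ : P ⊆ ⋃ i, closedBall (c₁ i) (r₁ i))
    (hx : P ⊆ closedBall x S ∪ (closedBall (c₀ 1) (r₀ 1) ∩ closedBall (c₁ j) (r₁ j))) :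
    ∃ γ ρ, IsMorph 2 P c₀ c₁ r₀ r₁ γ ρ ∧ ∀ i, ∀ t ∈ Icc (0 : ℝ) 1, ρ i t ≤ S := by
  set τ := Equiv.swap j 1
  obtain ⟨γ, ρ, hmorph, hρ⟩ := exists_isMorph_two_of_subset_union_inter_one (c₁ := c₁ ∘ τ)
    (r₁ := r₁ ∘ τ) hr₀ (fun i => hr₁ (τ i)) h₀
    (h₁.trans (τ.surjective.iUnion_comp fun i => closedBall (c₁ i) (r₁ i)).ge)
    (by simpa [τ] using hx)
  exact ⟨γ, ρ, hmorph.of_comp_perm τ, hρ⟩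

end Parking

theorem minmax_euclidean_two_center_morph_sqrt_two_general
    (P : Set E) (ρstar : ℝ)
    (c0 c1 : Fin 2 → E) (r0 r1 : Fin 2 → ℝ)
    (hr0 : ∀ i, 0 ≤ r0 i) (hr1 : ∀ i, 0 ≤ r1 i)
    (h0 : P ⊆ ⋃ i, Metric.closedBall (c0 i) (r0 i))
    (h1 : P ⊆ ⋃ i, Metric.closedBall (c1 i) (r1 i))
    (hb0 : ∀ i, r0 i ≤ ρstar) (hb1 : ∀ i, r1 i ≤ ρstar) :
    ∃ γ ρ, IsMorph 2 P c0 c1 r0 r1 γ ρ ∧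
      ∀ i, ∀ t ∈ Set.Icc (0:ℝ) 1, ρ i t ≤ Real.sqrt 2 * ρstar := by
  have hρ : 0 ≤ ρstar := (hr0 0).trans (hb0 0)
  have hS := le_sqrt_two_mul_self hρ
  obtain ⟨x, j, hx⟩ : ∃ x, ∃ j : Fin 2,
      P ⊆ closedBall x (√2 * ρstar) ∪ (closedBall (c0 1) (r0 1) ∩ closedBall (c1 j) (r1 j)) := by
    obtain ⟨x, hx | hx⟩ := exists_subset_closedBall_union_inter finrank_euclideanSpace_fin.le
      (h0.trans (iUnion_fin_two _).le) (h1.trans (iUnion_fin_two _).le) hρ (hb0 0) (hb0 1) (hb1 0) (hb1 1)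
    exacts [⟨x, 1, hx⟩, ⟨x, 0, hx⟩]
  exact exists_isMorph_two_of_subset_union_inter (fun i => ⟨hr0 i, (hb0 i).trans hS⟩)
    (fun i => ⟨hr1 i, (hb1 i).trans hS⟩) h0 h1 hx

theorem minmax_euclidean_two_center_morph_sqrt_two
    (P : Set E) (hP : P.Finite) (ρstar : ℝ) (hρstar : 0 ≤ ρstar)
    (hopt : ∀ (c : Fin 2 → E) (r : Fin 2 → ℝ),
      P ⊆ (⋃ i, Metric.closedBall (c i) (r i)) → ∃ i, ρstar ≤ r i)
    (c0 c1 : Fin 2 → E) (r0 r1 : Fin 2 → ℝ)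
    (hr0 : ∀ i, 0 ≤ r0 i) (hr1 : ∀ i, 0 ≤ r1 i)
    (h0 : P ⊆ ⋃ i, Metric.closedBall (c0 i) (r0 i))
    (h1 : P ⊆ ⋃ i, Metric.closedBall (c1 i) (r1 i))
    (hb0 : ∀ i, r0 i ≤ ρstar) (hb1 : ∀ i, r1 i ≤ ρstar) :
    ∃ γ ρ, IsMorph 2 P c0 c1 r0 r1 γ ρ ∧
      ∀ i, ∀ t ∈ Set.Icc (0:ℝ) 1, ρ i t ≤ Real.sqrt 2 * ρstar :=
  minmax_euclidean_two_center_morph_sqrt_two_general P ρstar c0 c1 r0 r1 hr0 hr1 h0 h1 hb0 hb1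

end
end

section
/- Work in the plane with the sup norm, E∞ = ℝ × ℝ with dist((x,y),(x',y')) = max(|x−x'|, |y−y'|), i.e. the product (sup) metric, so closed balls are axis-aligned squares. Let P = {(0,1), (1,0), (0,−1), (−1,0)} ⊆ E∞. Let R be the configuration of 2 squares with centers (1/2, 1/2) and (−1/2, −1/2), both of radius 1/2, and let B be the configuration with centers (−1/2, 1/2) and (1/2, −1/2), both of radius 1/2; both R and B cover P. Then for every continuous morph (γ, ρ) on [0,1] from R to B covering P, there exist t ∈ [0,1] and i ∈ Fin 2 with ρ i t ≥ 1. -/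
open Metric Set Real Pointwise

noncomputable section

theorem minmax_rectilinear_two_center_lower_bound
    (γ : Fin 2 → ℝ → ℝ × ℝ) (ρ : Fin 2 → ℝ → ℝ)
    (h : IsMorph 2 ({((0:ℝ), (1:ℝ)), (1, 0), (0, -1), (-1, 0)} : Set (ℝ × ℝ))
      ![(1/2, 1/2), (-1/2, -1/2)] ![(-1/2, 1/2), (1/2, -1/2)]
      (fun _ => 1/2) (fun _ => 1/2) γ ρ) :
    ∃ t ∈ Set.Icc (0:ℝ) 1, ∃ i, (1:ℝ) ≤ ρ i t := by
  obtain ⟨hγc, hρc, hρnn, hγ0, hρ0, ⟨σ, hγ1, hρ1⟩, hcov⟩ := h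
  by_contra hcon
  push_neg at hcon
  -- key: if A, B are antipodal points of P (dist 2), at no time is γ 0 equidistant to A and B
  have key : ∀ A B : ℝ × ℝ,
      A ∈ ({((0:ℝ), (1:ℝ)), (1, 0), (0, -1), (-1, 0)} : Set (ℝ × ℝ)) →
      B ∈ ({((0:ℝ), (1:ℝ)), (1, 0), (0, -1), (-1, 0)} : Set (ℝ × ℝ)) →
      dist A B = 2 →
      ∀ t ∈ Set.Icc (0:ℝ) 1, dist (γ 0 t) A ≠ dist (γ 0 t) B := by
    intro A B hA hB hAB t ht heq
    have htri := dist_triangle A (γ 0 t) B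
    rw [dist_comm A (γ 0 t), heq, hAB] at htri
    have h1 : (1:ℝ) ≤ dist (γ 0 t) B := by linarith
    have hρ0t := hcon t ht 0
    have hρ1t := hcon t ht 1
    have hAcov := hcov t ht hA
    have hBcov := hcov t ht hB
    simp only [Set.mem_iUnion, Metric.mem_closedBall, Fin.exists_fin_two] at hAcov hBcov
    have hA1 : dist A (γ 1 t) ≤ ρ 1 t := by
      rcases hAcov with hc | hc
      · exfalso; linarith [dist_comm (γ 0 t) A, dist_comm A (γ 0 t)]
      · linarith [dist_comm (γ 1 t) A, dist_comm A (γ 1 t)]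
    have hB1 : dist B (γ 1 t) ≤ ρ 1 t := by
      rcases hBcov with hc | hc
      · exfalso; linarith [dist_comm (γ 0 t) B, dist_comm B (γ 0 t)]
      · linarith [dist_comm (γ 1 t) B, dist_comm B (γ 1 t)]
    have htri2 := dist_triangle A (γ 1 t) B
    linarith [dist_comm (γ 1 t) B, hAB ▸ htri2]
  -- pick the antipodal pair depending on σ 0
  have hσ : σ 0 = 0 ∨ σ 0 = 1 := by omega
  have main : ∀ A B : ℝ × ℝ,
      A ∈ ({((0:ℝ), (1:ℝ)), (1, 0), (0, -1), (-1, 0)} : Set (ℝ × ℝ)) →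
      B ∈ ({((0:ℝ), (1:ℝ)), (1, 0), (0, -1), (-1, 0)} : Set (ℝ × ℝ)) →
      dist A B = 2 →
      dist (γ 0 0) A ≤ dist (γ 0 0) B →
      dist (γ 0 1) B ≤ dist (γ 0 1) A → False := by
    intro A B hA hB hAB h0 h1
    set f : ℝ → ℝ := fun t => dist (γ 0 t) A - dist (γ 0 t) B with hf
    have hfc : ContinuousOn f (Set.Icc 0 1) :=
      (((continuous_id.dist continuous_const).comp_continuousOn (hγc 0)).sub
        ((continuous_id.dist continuous_const).comp_continuousOn (hγc 0)))
    have h0' : f 0 ≤ 0 := by simp [hf]; linarith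
    have h1' : 0 ≤ f 1 := by simp [hf]; linarith
    have := intermediate_value_Icc (by norm_num : (0:ℝ) ≤ 1) hfc
      (Set.mem_Icc.mpr ⟨h0', h1'⟩)
    obtain ⟨t, ht, hft⟩ := this
    exact key A B hA hB hAB t ht (by simpa [hf, sub_eq_zero] using hft)
  have hγ00 : γ 0 0 = ((1:ℝ)/2, (1:ℝ)/2) := by simpa using hγ0 0
  rcases hσ with hs | hs
  · -- γ 0 1 = (-1/2, 1/2); use A = (1,0), B = (-1,0)
    have hγ01 : γ 0 1 = (-(1:ℝ)/2, (1:ℝ)/2) := by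
      have := hγ1 0
      rw [hs] at this
      simpa using this
    refine main (1, 0) (-1, 0) (by simp) (by simp) ?_ ?_ ?_
    · simp [Prod.dist_eq, Real.dist_eq]; norm_num [abs_of_nonneg, abs_of_nonpos]
    · rw [hγ00]; simp [Prod.dist_eq, Real.dist_eq]; norm_num [abs_of_nonneg, abs_of_nonpos]
    · rw [hγ01]; simp [Prod.dist_eq, Real.dist_eq]; norm_num [abs_of_nonneg, abs_of_nonpos]
  · -- γ 0 1 = (1/2, -1/2); use A = (0,1), B = (0,-1)
    have hγ01 : γ 0 1 = ((1:ℝ)/2, -(1:ℝ)/2) := by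
      have := hγ1 0
      rw [hs] at this
      simpa using this
    refine main (0, 1) (0, -1) (by simp) (by simp) ?_ ?_ ?_
    · simp [Prod.dist_eq, Real.dist_eq]; norm_num [abs_of_nonneg, abs_of_nonpos]
    · rw [hγ00]; simp [Prod.dist_eq, Real.dist_eq]; norm_num [abs_of_nonneg, abs_of_nonpos]
    · rw [hγ01]; simp [Prod.dist_eq, Real.dist_eq]; norm_num [abs_of_nonneg, abs_of_nonpos]
end
end

section
/- Let E = EuclideanSpace ℝ (Fin 2), let P ⊆ E be a finite point set, let k ≥ 2, and let C ≥ 0. Let R = (c⁰, r⁰) and B = (c¹, r¹) be two configurations of k disks, each covering P, with ∑ i, r⁰ i ≤ C and ∑ i, r¹ i ≤ C. Then there exists a continuous morph (γ, ρ) on [0,1] from R to B covering P such that ∑ i, ρ i t ≤ 2C for all t ∈ [0,1]. (Hence the topological stability ratio of the minsum Euclidean k-center problem is at most 2; the proof uses only the triangle inequality and therefore also applies in the rectilinear L∞ metric.) -/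
open Metric Set Real Pointwise

noncomputable section

/-! Pair disk `i` of the first configuration with disk `σ i` of the second, choosing `σ` so that
as many pairs as possible meet. By maximality, if disk `i` meets disk `σ m`, then pair `i` or
pair `m` meets: otherwise swapping `σ i` and `σ m` would create one more meeting pair. Disk `i`
stays put for the first third of the time and ends on disk `σ i` during the last third; in the
middle third a meeting pair rests on a disk of radius `r⁰ i + r¹ (σ i)` containing both, while a
non-meeting pair slides freely. A point of `P` in disks `i` and `σ m` is then covered by disk `i`
in the first third, by disk `m` in the last, and in between by whichever of the two belongs to a
meeting pair. All radii stay below `r⁰ i + r¹ (σ i)`, whose sum is at most `2C`. -/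

open AffineMap Convex

/-- Piecewise-linear path through `w₀, w₁, w₂, w₃` at times `0, 1/3, 2/3, 1`, constant outside
`[0, 1]`. -/
def threeLegPath {M : Type*} [AddCommGroup M] [Module ℝ M] (w₀ w₁ w₂ w₃ : M) (t : ℝ) : M :=
  w₀ + (projIcc 0 1 zero_le_one (3 * t) : ℝ) • (w₁ - w₀) +
    (projIcc 0 1 zero_le_one (3 * t - 1) : ℝ) • (w₂ - w₁) +
    (projIcc 0 1 zero_le_one (3 * t - 2) : ℝ) • (w₃ - w₂)

section ThreeLegPath

variable {M : Type*} [AddCommGroup M] [Module ℝ M] {w₀ w₁ w₂ w₃ : M} {t : ℝ}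

theorem continuous_threeLegPath [TopologicalSpace M] [IsTopologicalAddGroup M]
    [ContinuousSMul ℝ M] : Continuous (threeLegPath w₀ w₁ w₂ w₃) := by
  unfold threeLegPath
  fun_prop

@[simp]
theorem threeLegPath_zero : threeLegPath w₀ w₁ w₂ w₃ 0 = w₀ := by
  simp [threeLegPath, projIcc_of_le_left]

@[simp]
theorem threeLegPath_one : threeLegPath w₀ w₁ w₂ w₃ 1 = w₃ := by
  norm_num [threeLegPath, projIcc_of_right_le]

theorem threeLegPath_mem_segment_of_le (ht : t ≤ 1 / 3) :
    threeLegPath w₀ w₁ w₂ w₃ t ∈ [w₀ -[ℝ] w₁] := by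
  rw [segment_eq_image']
  refine ⟨_, (projIcc 0 1 zero_le_one (3 * t)).2, ?_⟩
  simp [threeLegPath, projIcc_of_le_left, show 3 * t - 1 ≤ 0 by linarith,
    show 3 * t - 2 ≤ 0 by linarith]

theorem threeLegPath_mem_segment_of_mem_Icc (ht : t ∈ Icc (1 / 3) (2 / 3)) :
    threeLegPath w₀ w₁ w₂ w₃ t ∈ [w₁ -[ℝ] w₂] := by
  rw [segment_eq_image']
  refine ⟨_, (projIcc 0 1 zero_le_one (3 * t - 1)).2, ?_⟩
  rw [threeLegPath, projIcc_of_right_le zero_le_one (show 1 ≤ 3 * t by linarith [ht.1]),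
    projIcc_of_le_left zero_le_one (show 3 * t - 2 ≤ 0 by linarith [ht.2])]
  module

theorem threeLegPath_mem_segment_of_ge (ht : 2 / 3 ≤ t) :
    threeLegPath w₀ w₁ w₂ w₃ t ∈ [w₂ -[ℝ] w₃] := by
  rw [segment_eq_image']
  refine ⟨_, (projIcc 0 1 zero_le_one (3 * t - 2)).2, ?_⟩
  rw [threeLegPath, projIcc_of_right_le zero_le_one (show 1 ≤ 3 * t by linarith),
    projIcc_of_right_le zero_le_one (show 1 ≤ 3 * t - 1 by linarith)]
  module

theorem Convex.threeLegPath_mem {K : Set M} (hK : Convex ℝ K) (h₀ : w₀ ∈ K) (h₁ : w₁ ∈ K)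
    (h₂ : w₂ ∈ K) (h₃ : w₃ ∈ K) (t : ℝ) : threeLegPath w₀ w₁ w₂ w₃ t ∈ K := by
  rcases le_total t (1 / 3) with ht | ht
  · exact hK.segment_subset h₀ h₁ (threeLegPath_mem_segment_of_le ht)
  rcases le_total t (2 / 3) with ht' | ht'
  · exact hK.segment_subset h₁ h₂ (threeLegPath_mem_segment_of_mem_Icc ⟨ht, ht'⟩)
  · exact hK.segment_subset h₂ h₃ (threeLegPath_mem_segment_of_ge ht')

end ThreeLegPath

section DiskPath

variable {V : Type*} [NormedAddCommGroup V] [NormedSpace ℝ V]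

theorem convex_setOf_mem_closedBall (p : V) : Convex ℝ {w : V × ℝ | p ∈ closedBall w.1 w.2} := by
  convert ((convexOn_dist p convex_univ).convex_epigraph) using 1
  ext w
  simp [dist_comm]

/-- The point dividing `[x, y]` in the ratio `b : a` is within `b` of `x` and within `a` of `y`. -/
theorem closedBall_union_closedBall_subset_closedBall_lineMap {x y : V} {a b : ℝ} (ha : 0 ≤ a)
    (hb : 0 ≤ b) (hxy : dist x y ≤ a + b) :
    closedBall x a ∪ closedBall y b ⊆ closedBall (lineMap x y (b / (a + b))) (a + b) := by
  have hθ : b / (a + b) * (a + b) = b := by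
    rcases (add_nonneg ha hb).eq_or_lt with h | h
    · simp [show b = 0 by linarith]
    · exact div_mul_cancel₀ b h.ne'
  have hθ₀ : 0 ≤ b / (a + b) := div_nonneg hb (add_nonneg ha hb)
  have hθ₁ : b / (a + b) ≤ 1 := div_le_one_of_le₀ (by linarith) (add_nonneg ha hb)
  refine union_subset (closedBall_subset_closedBall' ?_) (closedBall_subset_closedBall' ?_)
  · rw [dist_comm, dist_lineMap_left, Real.norm_of_nonneg hθ₀]
    nlinarith
  · rw [dist_comm, dist_lineMap_right, Real.norm_of_nonneg (sub_nonneg.2 hθ₁)]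
    nlinarith

/-- If the disks `(x, a)` and `(y, b)` meet, the path rests during the middle third on a disk of
radius `a + b` containing both; otherwise it just slides from one to the other then. -/
def diskPath (x : V) (a : ℝ) (y : V) (b : ℝ) : ℝ → V × ℝ :=
  if dist x y ≤ a + b then
    threeLegPath (x, a) (lineMap x y (b / (a + b)), a + b) (lineMap x y (b / (a + b)), a + b) (y, b)
  else threeLegPath (x, a) (x, a) (y, b) (y, b)

variable {x y p : V} {a b t : ℝ}

theorem continuous_diskPath : Continuous (diskPath x a y b) := by
  unfold diskPath
  split_ifs <;> exact continuous_threeLegPath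

@[simp]
theorem diskPath_zero : diskPath x a y b 0 = (x, a) := by
  unfold diskPath
  split_ifs <;> simp

@[simp]
theorem diskPath_one : diskPath x a y b 1 = (y, b) := by
  unfold diskPath
  split_ifs <;> simp

theorem diskPath_snd_mem_Icc (ha : 0 ≤ a) (hb : 0 ≤ b) (t : ℝ) :
    (diskPath x a y b t).2 ∈ Icc 0 (a + b) := by
  have hK : Convex ℝ {w : V × ℝ | w.2 ∈ Icc 0 (a + b)} :=
    (convex_Icc 0 (a + b)).linear_preimage (LinearMap.snd ℝ V ℝ)
  have hx : ((x, a) : V × ℝ) ∈ {w : V × ℝ | w.2 ∈ Icc 0 (a + b)} := ⟨ha, by simpa⟩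
  have hy : ((y, b) : V × ℝ) ∈ {w : V × ℝ | w.2 ∈ Icc 0 (a + b)} := ⟨hb, by simpa⟩
  have hz (z : V) : ((z, a + b) : V × ℝ) ∈ {w : V × ℝ | w.2 ∈ Icc 0 (a + b)} :=
    ⟨add_nonneg ha hb, le_rfl⟩
  unfold diskPath
  split_ifs
  · exact hK.threeLegPath_mem hx (hz _) (hz _) hy t
  · exact hK.threeLegPath_mem hx hx hy hy t

theorem mem_closedBall_diskPath_of_le (ha : 0 ≤ a) (hb : 0 ≤ b) (hp : p ∈ closedBall x a)
    (ht : t ≤ 1 / 3) : p ∈ closedBall (diskPath x a y b t).1 (diskPath x a y b t).2 := by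
  have hK := convex_setOf_mem_closedBall p
  unfold diskPath
  split_ifs with hxy
  · have hz := closedBall_union_closedBall_subset_closedBall_lineMap ha hb hxy (.inl hp)
    exact hK.segment_subset hp hz (threeLegPath_mem_segment_of_le ht)
  · exact hK.segment_subset hp hp (threeLegPath_mem_segment_of_le ht)

theorem mem_closedBall_diskPath_of_ge (ha : 0 ≤ a) (hb : 0 ≤ b) (hp : p ∈ closedBall y b)
    (ht : 2 / 3 ≤ t) : p ∈ closedBall (diskPath x a y b t).1 (diskPath x a y b t).2 := by
  have hK := convex_setOf_mem_closedBall p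
  unfold diskPath
  split_ifs with hxy
  · have hz := closedBall_union_closedBall_subset_closedBall_lineMap ha hb hxy (.inr hp)
    exact hK.segment_subset hz hp (threeLegPath_mem_segment_of_ge ht)
  · exact hK.segment_subset hp hp (threeLegPath_mem_segment_of_ge ht)

theorem mem_closedBall_diskPath_of_dist_le (ha : 0 ≤ a) (hb : 0 ≤ b) (hxy : dist x y ≤ a + b)
    (hp : p ∈ closedBall x a ∪ closedBall y b) (ht : t ∈ Icc (1 / 3) (2 / 3)) :
    p ∈ closedBall (diskPath x a y b t).1 (diskPath x a y b t).2 := by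
  have hz := closedBall_union_closedBall_subset_closedBall_lineMap ha hb hxy hp
  rw [diskPath, if_pos hxy]
  exact (convex_setOf_mem_closedBall p).segment_subset hz hz
    (threeLegPath_mem_segment_of_mem_Icc ht)

end DiskPath

theorem exists_perm_rel_or_rel {α : Type*} [Fintype α] (r : α → α → Prop) :
    ∃ σ : Equiv.Perm α, ∀ i j, r i (σ j) → r i (σ i) ∨ r j (σ j) := by
  classical
  obtain ⟨σ, -, hmax⟩ := Finset.exists_max_image Finset.univ
    (fun σ : Equiv.Perm α => (Finset.univ.filter fun i => r i (σ i)).card) Finset.univ_nonempty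
  refine ⟨σ, fun i j hij => ?_⟩
  by_contra! hij'
  -- `σ * swap i j` would relate strictly more indices to their images
  have hsub : insert i (Finset.univ.filter fun x => r x (σ x)) ⊆
      Finset.univ.filter fun x => r x ((σ * Equiv.swap i j) x) := by
    intro x hx
    simp only [Finset.mem_insert, Finset.mem_filter, Finset.mem_univ, true_and] at hx ⊢
    rcases hx with rfl | hx
    · simpa using hij
    · rwa [Equiv.Perm.mul_apply, Equiv.swap_apply_of_ne_of_ne (by grind) (by grind)]
  have hcard := Finset.card_le_card hsub
  rw [Finset.card_insert_of_notMem (by simpa using hij'.1)] at hcard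
  linarith [hmax (σ * Equiv.swap i j) (Finset.mem_univ _)]

theorem exists_isMorph_sum_le {V : Type*} [NormedAddCommGroup V] [NormedSpace ℝ V]
    (k : ℕ) (P : Set V) (c0 c1 : Fin k → V) (r0 r1 : Fin k → ℝ)
    (hr0 : ∀ i, 0 ≤ r0 i) (hr1 : ∀ i, 0 ≤ r1 i)
    (h0 : P ⊆ ⋃ i, closedBall (c0 i) (r0 i)) (h1 : P ⊆ ⋃ i, closedBall (c1 i) (r1 i)) :
    ∃ γ ρ, IsMorph k P c0 c1 r0 r1 γ ρ ∧
      ∀ t ∈ Icc (0 : ℝ) 1, ∑ i, ρ i t ≤ ∑ i, r0 i + ∑ i, r1 i := by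
  obtain ⟨σ, hσ⟩ := exists_perm_rel_or_rel fun i j => dist (c0 i) (c1 j) ≤ r0 i + r1 j
  let path i := diskPath (c0 i) (r0 i) (c1 (σ i)) (r1 (σ i))
  refine ⟨fun i t => (path i t).1, fun i t => (path i t).2,
    ⟨fun i => (continuous_fst.comp continuous_diskPath).continuousOn,
      fun i => (continuous_snd.comp continuous_diskPath).continuousOn,
      fun i t _ => (diskPath_snd_mem_Icc (hr0 i) (hr1 _) t).1,
      fun i => by simp [path], fun i => by simp [path], ⟨σ, fun i => by simp [path],
      fun i => by simp [path]⟩, fun t _ p hp => ?_⟩, fun t _ => ?_⟩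
  · obtain ⟨i, hi⟩ := mem_iUnion.1 (h0 hp)
    obtain ⟨j, hj⟩ := mem_iUnion.1 (h1 hp)
    obtain ⟨m, rfl⟩ := σ.surjective j
    refine mem_iUnion.2 ?_
    rcases le_or_gt t (1 / 3) with ht₁ | ht₁
    · exact ⟨i, mem_closedBall_diskPath_of_le (hr0 i) (hr1 _) hi ht₁⟩
    rcases le_or_gt (2 / 3) t with ht₂ | ht₂
    · exact ⟨m, mem_closedBall_diskPath_of_ge (hr0 m) (hr1 _) hj ht₂⟩
    rcases hσ i m ((dist_triangle_left _ _ p).trans (add_le_add hi hj)) with him | hm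
    · exact ⟨i, mem_closedBall_diskPath_of_dist_le (hr0 i) (hr1 _) him (.inl hi)
        ⟨ht₁.le, ht₂.le⟩⟩
    · exact ⟨m, mem_closedBall_diskPath_of_dist_le (hr0 m) (hr1 _) hm (.inr hj)
        ⟨ht₁.le, ht₂.le⟩⟩
  · calc ∑ i, (path i t).2 ≤ ∑ i, (r0 i + r1 (σ i)) :=
          Finset.sum_le_sum fun i _ => (diskPath_snd_mem_Icc (hr0 i) (hr1 _) t).2
      _ = ∑ i, r0 i + ∑ i, r1 i := by rw [Finset.sum_add_distrib, Equiv.sum_comp σ r1]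

theorem minsum_euclidean_morph_factor_two_general
    (k : ℕ) (P : Set E) (C : ℝ)
    (c0 c1 : Fin k → E) (r0 r1 : Fin k → ℝ)
    (hr0 : ∀ i, 0 ≤ r0 i) (hr1 : ∀ i, 0 ≤ r1 i)
    (h0 : P ⊆ ⋃ i, Metric.closedBall (c0 i) (r0 i))
    (h1 : P ⊆ ⋃ i, Metric.closedBall (c1 i) (r1 i))
    (hb0 : ∑ i, r0 i ≤ C) (hb1 : ∑ i, r1 i ≤ C) :
    ∃ γ ρ, IsMorph k P c0 c1 r0 r1 γ ρ ∧
      ∀ t ∈ Set.Icc (0:ℝ) 1, ∑ i, ρ i t ≤ 2 * C := by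
  obtain ⟨γ, ρ, hmorph, hsum⟩ := exists_isMorph_sum_le k P c0 c1 r0 r1 hr0 hr1 h0 h1
  exact ⟨γ, ρ, hmorph, fun t ht => by linarith [hsum t ht]⟩

theorem minsum_euclidean_morph_factor_two
    (k : ℕ) (hk : 2 ≤ k) (P : Set E) (hP : P.Finite) (C : ℝ) (hC : 0 ≤ C)
    (c0 c1 : Fin k → E) (r0 r1 : Fin k → ℝ)
    (hr0 : ∀ i, 0 ≤ r0 i) (hr1 : ∀ i, 0 ≤ r1 i)
    (h0 : P ⊆ ⋃ i, Metric.closedBall (c0 i) (r0 i))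
    (h1 : P ⊆ ⋃ i, Metric.closedBall (c1 i) (r1 i))
    (hb0 : ∑ i, r0 i ≤ C) (hb1 : ∑ i, r1 i ≤ C) :
    ∃ γ ρ, IsMorph k P c0 c1 r0 r1 γ ρ ∧
      ∀ t ∈ Set.Icc (0:ℝ) 1, ∑ i, ρ i t ≤ 2 * C :=
  minsum_euclidean_morph_factor_two_general k P C c0 c1 r0 r1 hr0 hr1 h0 h1 hb0 hb1
end
end

section
/- Let E = EuclideanSpace ℝ (Fin 2) and P = {(0,−1), (0,0), (0,1)} ⊆ E. Let R be the configuration of 2 disks with centers (0, 1/2) and (0, −1) and radii 1/2 and 0 respectively, and let B be the configuration with centers (0, 1) and (0, −1/2) and radii 0 and 1/2 respectively; both R and B cover P with total radius 1/2. Then for every continuous morph (γ, ρ) on [0,1] from R to B covering P, there exists t ∈ [0,1] with ρ 0 t + ρ 1 t ≥ 1. (Since every 2-disk cover of P has total radius at least 1/2, this shows the topological stability ratio of the minsum Euclidean 2-center problem is at least 2; as the construction is one dimensional, the same holds in the rectilinear L∞ metric.) -/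
open Metric Set Real Pointwise

noncomputable section

/-! Suppose the total radius stays below `1`. A disk then never contains both `(0,1)` and
`(0,-1)`, so `(0,1)` lies in exactly one disk at every time, and so does `(0,0)`: two disks
containing it would each have to reach one of the outer points, forcing radii `≥ 1/2` each.
By connectedness of `[0,1]` the disk containing a point covered exactly once never changes,
so disk `0`, which starts with both `(0,0)` and `(0,1)`, still holds both at time `1`; but no
disk of the final configuration does. -/

lemma dist_pt_pt (x a b : ℝ) : dist (pt x a) (pt x b) = |a - b| := by
  simp [EuclideanSpace.dist_eq, pt, Fin.sum_univ_two, Real.dist_eq, Real.sqrt_sq_eq_abs]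

lemma dist_le_two_mul_of_mem_closedBall {X : Type*} [PseudoMetricSpace X] {c p q : X} {r : ℝ}
    (hp : p ∈ closedBall c r) (hq : q ∈ closedBall c r) : dist p q ≤ 2 * r := by
  linarith [dist_triangle_right p q c, mem_closedBall.1 hp, mem_closedBall.1 hq]

lemma notMem_closedBall_of_mem_closedBall_of_lt_dist {X : Type*} [PseudoMetricSpace X]
    {c p q : X} {r : ℝ} (hpq : 2 * r < dist p q) (hp : p ∈ closedBall c r) :
    q ∉ closedBall c r :=
  fun hq ↦ (dist_le_two_mul_of_mem_closedBall hp hq).not_gt hpq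

theorem IsPreconnected.mem_closedBall_of_xor {T X : Type*} [TopologicalSpace T]
    [PseudoMetricSpace X] {S : Set T} (hS : IsPreconnected S) {c₀ c₁ : T → X} {r₀ r₁ : T → ℝ}
    (hc₀ : ContinuousOn c₀ S) (hc₁ : ContinuousOn c₁ S) (hr₀ : ContinuousOn r₀ S)
    (hr₁ : ContinuousOn r₁ S) {p : X}
    (hp : ∀ t ∈ S, Xor (p ∈ closedBall (c₀ t) (r₀ t)) (p ∈ closedBall (c₁ t) (r₁ t)))
    {a b : T} (ha : a ∈ S) (hb : b ∈ S) (hpa : p ∈ closedBall (c₀ a) (r₀ a)) :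
    p ∈ closedBall (c₀ b) (r₀ b) := by
  by_contra hpb
  simp only [xor_iff_or_and_not_and, mem_closedBall, not_and_or, not_le] at hp hpa hpb
  -- compare the slacks `dist p (cᵢ t) - rᵢ t`: a crossing point would lie in both balls
  obtain ⟨x, hx, hfg⟩ := hS.intermediate_value₂ ha hb
    (f := fun t ↦ dist p (c₀ t) - r₀ t) (g := fun t ↦ dist p (c₁ t) - r₁ t)
    (by fun_prop) (by fun_prop)
    (by rcases hp a ha with ⟨_, _ | _⟩ <;> linarith)
    (by rcases hp b hb with ⟨_ | _, _⟩ <;> linarith)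
  rcases hp x hx with ⟨_ | _, _ | _⟩ <;> linarith

section TwoBalls

variable {X : Type*} [PseudoMetricSpace X] {c : Fin 2 → X} {r : Fin 2 → ℝ} {a m b : X}

lemma xor_mem_closedBall_of_lt_dist (hab : ∀ i, 2 * r i < dist a b)
    (ha : a ∈ ⋃ i, closedBall (c i) (r i)) (hb : b ∈ ⋃ i, closedBall (c i) (r i)) :
    Xor (b ∈ closedBall (c 0) (r 0)) (b ∈ closedBall (c 1) (r 1)) := by
  rw [mem_iUnion, Fin.exists_fin_two] at ha hb
  refine (xor_iff_or_and_not_and _ _).2 ⟨hb, fun ⟨hb₀, hb₁⟩ ↦ ?_⟩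
  rcases ha with ha | ha
  exacts [notMem_closedBall_of_mem_closedBall_of_lt_dist (hab 0) ha hb₀,
    notMem_closedBall_of_mem_closedBall_of_lt_dist (hab 1) ha hb₁]

lemma xor_mem_closedBall_of_lt_dist_add_dist (hab : ∀ i, 2 * r i < dist a b)
    (hamb : 2 * (r 0 + r 1) < dist a m + dist m b) (ha : a ∈ ⋃ i, closedBall (c i) (r i))
    (hm : m ∈ ⋃ i, closedBall (c i) (r i)) (hb : b ∈ ⋃ i, closedBall (c i) (r i)) :
    Xor (m ∈ closedBall (c 0) (r 0)) (m ∈ closedBall (c 1) (r 1)) := by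
  rw [mem_iUnion, Fin.exists_fin_two] at ha hm hb
  refine (xor_iff_or_and_not_and _ _).2 ⟨hm, fun ⟨hm₀, hm₁⟩ ↦ ?_⟩
  rcases ha with ha | ha <;> rcases hb with hb | hb
  · exact notMem_closedBall_of_mem_closedBall_of_lt_dist (hab 0) ha hb
  · linarith [dist_le_two_mul_of_mem_closedBall ha hm₀, dist_le_two_mul_of_mem_closedBall hm₁ hb]
  · linarith [dist_le_two_mul_of_mem_closedBall ha hm₁, dist_le_two_mul_of_mem_closedBall hm₀ hb]
  · exact notMem_closedBall_of_mem_closedBall_of_lt_dist (hab 1) ha hb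

end TwoBalls

theorem minsum_euclidean_two_center_lower_bound
    (γ : Fin 2 → ℝ → E) (ρ : Fin 2 → ℝ → ℝ)
    (h : IsMorph 2 ({pt 0 (-1), pt 0 0, pt 0 1} : Set E)
      ![pt 0 (1/2), pt 0 (-1)] ![pt 0 1, pt 0 (-1/2)]
      ![1/2, 0] ![0, 1/2] γ ρ) :
    ∃ t ∈ Set.Icc (0:ℝ) 1, (1:ℝ) ≤ ρ 0 t + ρ 1 t := by
  obtain ⟨hγ, hρ, hρ_nonneg, hγ₀, hρ₀, ⟨σ, hγ₁, hρ₁⟩, hcov⟩ := h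
  by_contra! hsmall
  have hfar (t) (ht : t ∈ Icc (0:ℝ) 1) : ∀ i, 2 * ρ i t < dist (pt 0 (-1)) (pt 0 1) := by
    norm_num [Fin.forall_fin_two, dist_pt_pt]
    constructor <;> linarith [hsmall t ht, hρ_nonneg 0 t ht, hρ_nonneg 1 t ht]
  have hxor : ∀ q ∈ ({pt 0 0, pt 0 1} : Set E), ∀ t ∈ Icc (0:ℝ) 1,
      Xor (q ∈ closedBall (γ 0 t) (ρ 0 t)) (q ∈ closedBall (γ 1 t) (ρ 1 t)) := by
    rintro q (rfl | rfl) t ht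
    · refine xor_mem_closedBall_of_lt_dist_add_dist (c := (γ · t)) (hfar t ht) ?_
        (hcov t ht (by simp)) (hcov t ht (by simp)) (hcov t ht (by simp))
      norm_num [dist_pt_pt]
      linarith [hsmall t ht]
    · exact xor_mem_closedBall_of_lt_dist (c := (γ · t)) (hfar t ht)
        (hcov t ht (by simp)) (hcov t ht (by simp))
  have hend : ∀ q ∈ ({pt 0 0, pt 0 1} : Set E), q ∈ closedBall (γ 0 1) (ρ 0 1) := by
    intro q hq
    refine isPreconnected_Icc.mem_closedBall_of_xor (hγ 0) (hγ 1) (hρ 0) (hρ 1) (hxor q hq)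
      (left_mem_Icc.2 zero_le_one) (right_mem_Icc.2 zero_le_one) ?_
    rcases hq with rfl | rfl <;> norm_num [hγ₀, hρ₀, dist_pt_pt]
  have h₀ := hend (pt 0 0) (by simp)
  have h₁ := hend (pt 0 1) (by simp)
  rw [hγ₁, hρ₁] at h₀ h₁
  generalize σ 0 = j at h₀ h₁
  fin_cases j
  · norm_num [mem_closedBall, dist_pt_pt, -closedBall_zero] at h₀
  · norm_num [mem_closedBall, dist_pt_pt] at h₁
end
end
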